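/- If A is a tensor with nonpositive off-diagonal entries and there exists a vector x ∈ ℝ^n with x > 0 (strictly positive) such that A x^{m-1} > 0 componentwise, then A is an M-tensor. -/

import Mathlib

/-!
Shift `A` to `B = c I - A` with `c` above every diagonal entry, so `B ≥ 0` and
`B x^{m-1} = c x^{[m-1]} - A x^{m-1} < c x^{[m-1]}`. By finiteness some `r < c` already satisfies
`B x^{m-1} ≤ r x^{[m-1]}`, and the Collatz–Wielandt bound gives `ρ(B) ≤ r`: for an eigenpair
`(λ, y)`, scale `x` until it dominates `|y|` with equality at some index `p`; the triangle
inequality at `p` then yields `|λ| ≤ r`.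
-/

open scoped BigOperators

/-- Action of an `(k+1)`-order `n`-dimensional real tensor on a complex vector:
`(A x^{m-1})_i = ∑_{i2,...,im} A_{i i2...im} x_{i2} ⋯ x_{im}` (here `k = m-1`). -/
noncomputable def tApplyC {n k : ℕ} (A : Fin n → (Fin k → Fin n) → ℝ) (x : Fin n → ℂ) (i : Fin n) : ℂ :=
  ∑ j : Fin k → Fin n, (A i j : ℂ) * ∏ t, x (j t)

/-- Real version of the tensor action. -/
def tApplyR {n k : ℕ} (A : Fin n → (Fin k → Fin n) → ℝ) (x : Fin n → ℝ) (i : Fin n) : ℝ :=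
  ∑ j : Fin k → Fin n, A i j * ∏ t, x (j t)

/-- `(lam, x)` is an eigenvalue-eigenvector pair: `x ≠ 0` and `A x^{m-1} = lam x^{[m-1]}`. -/
def IsEigPair {n k : ℕ} (A : Fin n → (Fin k → Fin n) → ℝ) (lam : ℂ) (x : Fin n → ℂ) : Prop :=
  x ≠ 0 ∧ ∀ i, tApplyC A x i = lam * x i ^ k

/-- `lam` is an eigenvalue of `A`. -/
def IsEig {n k : ℕ} (A : Fin n → (Fin k → Fin n) → ℝ) (lam : ℂ) : Prop :=
  ∃ x, IsEigPair A lam x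

/-- The set of moduli of eigenvalues of `A`. -/
def modSet {n k : ℕ} (A : Fin n → (Fin k → Fin n) → ℝ) : Set ℝ :=
  {r | ∃ lam, IsEig A lam ∧ r = ‖lam‖}

/-- The spectral radius: supremum of moduli of eigenvalues. -/
noncomputable def specRad {n k : ℕ} (A : Fin n → (Fin k → Fin n) → ℝ) : ℝ :=
  sSup (modSet A)

/-- The identity tensor: entries `δ_{i i2...im}`. -/
noncomputable def idT (n k : ℕ) : Fin n → (Fin k → Fin n) → ℝ :=
  fun i j => if (∀ t, j t = i) then 1 else 0

/-- Entrywise nonnegative tensor. -/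
def NonnegT {n k : ℕ} (A : Fin n → (Fin k → Fin n) → ℝ) : Prop := ∀ i j, 0 ≤ A i j

/-- `A` is an M-tensor: `A = c I - B` with `B ≥ 0` and `c > ρ(B)`. -/
def IsMTensor {n k : ℕ} (A : Fin n → (Fin k → Fin n) → ℝ) : Prop :=
  ∃ (B : Fin n → (Fin k → Fin n) → ℝ) (c : ℝ),
    NonnegT B ∧ specRad B < c ∧ ∀ i j, A i j = c * idT n k i j - B i j

/-- `ρ(A)` is an eigenvalue of `A` and bounds the modulus of every eigenvalue
(the Yang–Yang theorem for nonnegative tensors). -/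
def HasSpecRad {n k : ℕ} (A : Fin n → (Fin k → Fin n) → ℝ) : Prop :=
  IsEig A (specRad A) ∧ ∀ lam, IsEig A lam → ‖lam‖ ≤ specRad A

/-- Off-diagonal entries of `A` are all nonpositive (`A ∈ 𝕫`). -/
def ZTensor {n k : ℕ} (A : Fin n → (Fin k → Fin n) → ℝ) : Prop :=
  ∀ i j, (¬ ∀ t, j t = i) → A i j ≤ 0

/-- Irreducibility of a tensor. -/
def IrreducibleT {n k : ℕ} (A : Fin n → (Fin k → Fin n) → ℝ) : Prop :=
  ¬ ∃ S : Set (Fin n), S.Nonempty ∧ S ≠ Set.univ ∧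
      ∀ i ∈ S, ∀ j : Fin k → Fin n, (∀ t, j t ∉ S) → A i j = 0

/-- `C_i = ∑_{(i2,...,im) not all equal to i} |A_{i i2...im}|`. -/
noncomputable def offDiagSum {n k : ℕ} (A : Fin n → (Fin k → Fin n) → ℝ) (i : Fin n) : ℝ :=
  ∑ j ∈ Finset.univ.filter (fun j : Fin k → Fin n => ¬ ∀ t, j t = i), |A i j|

theorem Finite.exists_lt_forall_le_of_forall_lt {ι α : Type*} [Finite ι] [LinearOrder α]
    [NoMinOrder α] {f : ι → α} {c : α} (h : ∀ i, f i < c) : ∃ r < c, ∀ i, f i ≤ r := by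
  cases isEmpty_or_nonempty ι
  · obtain ⟨r, hr⟩ := exists_lt c
    exact ⟨r, hr, isEmptyElim⟩
  · obtain ⟨i₀, hi₀⟩ := Finite.exists_max f
    exact ⟨f i₀, h i₀, hi₀⟩

section TensorAction

variable {n k : ℕ}

theorem tApplyR_idT (x : Fin n → ℝ) (i : Fin n) : tApplyR (idT n k) x i = x i ^ k := by
  rw [tApplyR, Finset.sum_eq_single (fun _ => i : Fin k → Fin n)]
  · simp [idT, Finset.prod_const]
  · intro j _ hj
    have h : ¬ ∀ t, j t = i := fun h => hj (funext h)
    simp [idT, h]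
  · exact fun h => absurd (Finset.mem_univ _) h

theorem tApplyR_smul_idT_sub (c : ℝ) (A : Fin n → (Fin k → Fin n) → ℝ) (x : Fin n → ℝ)
    (i : Fin n) :
    tApplyR (fun i j => c * idT n k i j - A i j) x i = c * x i ^ k - tApplyR A x i := by
  rw [← tApplyR_idT x i]
  simp only [tApplyR, sub_mul, Finset.sum_sub_distrib, mul_assoc, ← Finset.mul_sum]

theorem tApplyR_smul (A : Fin n → (Fin k → Fin n) → ℝ) (t : ℝ) (x : Fin n → ℝ) (i : Fin n) :
    tApplyR A (t • x) i = t ^ k * tApplyR A x i := by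
  simp only [tApplyR, Finset.mul_sum, Pi.smul_apply, smul_eq_mul, Finset.prod_mul_distrib,
    Finset.prod_const, Finset.card_univ, Fintype.card_fin]
  exact Finset.sum_congr rfl fun _ _ => by ring

theorem nonnegT_smul_idT_sub {A : Fin n → (Fin k → Fin n) → ℝ} (hZ : ZTensor A) {c : ℝ}
    (hc : ∀ i, A i (fun _ => i) ≤ c) : NonnegT (fun i j => c * idT n k i j - A i j) := by
  intro i j
  by_cases h : ∀ t, j t = i
  · obtain rfl : j = fun _ => i := funext h
    simpa [idT] using hc i
  · simpa [idT, h] using hZ i j h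

theorem norm_tApplyC_le {B : Fin n → (Fin k → Fin n) → ℝ} (hB : NonnegT B) {y : Fin n → ℂ}
    {x : Fin n → ℝ} (hyx : ∀ i, ‖y i‖ ≤ x i) (i : Fin n) : ‖tApplyC B y i‖ ≤ tApplyR B x i := by
  calc ‖tApplyC B y i‖ ≤ ∑ j : Fin k → Fin n, ‖(B i j : ℂ) * ∏ t, y (j t)‖ := norm_sum_le _ _
    _ = ∑ j : Fin k → Fin n, B i j * ∏ t, ‖y (j t)‖ := by
        refine Finset.sum_congr rfl fun j _ => ?_
        rw [norm_mul, norm_prod, Complex.norm_of_nonneg (hB i j)]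
    _ ≤ tApplyR B x i :=
        Finset.sum_le_sum fun j _ => mul_le_mul_of_nonneg_left
          (Finset.prod_le_prod (fun _ _ => norm_nonneg _) fun t _ => hyx (j t)) (hB i j)

/-- Collatz–Wielandt upper bound. -/
theorem norm_le_of_isEig_of_tApplyR_le {B : Fin n → (Fin k → Fin n) → ℝ} (hB : NonnegT B)
    {x : Fin n → ℝ} (hx : ∀ i, 0 < x i) {r : ℝ} (hr : ∀ i, tApplyR B x i ≤ r * x i ^ k)
    {lam : ℂ} (hlam : IsEig B lam) : ‖lam‖ ≤ r := by
  obtain ⟨y, hy0, hy⟩ := hlam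
  obtain ⟨i₀, hi₀⟩ := Function.ne_iff.mp hy0
  have : Nonempty (Fin n) := ⟨i₀⟩
  obtain ⟨p, hp⟩ := Finite.exists_max fun i => ‖y i‖ / x i
  set t := ‖y p‖ / x p
  have hyp_pos : 0 < ‖y p‖ := by
    have := (div_pos (norm_pos_iff.mpr hi₀) (hx i₀)).trans_le (hp i₀)
    exact (div_pos_iff_of_pos_right (hx p)).mp this
  have hyx : ∀ i, ‖y i‖ ≤ (t • x) i := fun i => (div_le_iff₀ (hx i)).mp (hp i)
  have hyp : ‖y p‖ = (t • x) p := (div_mul_cancel₀ _ (hx p).ne').symm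
  have key : ‖lam‖ * ‖y p‖ ^ k ≤ r * ‖y p‖ ^ k :=
    calc ‖lam‖ * ‖y p‖ ^ k = ‖tApplyC B y p‖ := by rw [hy p, norm_mul, norm_pow]
      _ ≤ tApplyR B (t • x) p := norm_tApplyC_le hB hyx p
      _ ≤ r * ‖y p‖ ^ k := by
        rw [tApplyR_smul, hyp, Pi.smul_apply, smul_eq_mul, mul_pow]
        nlinarith [hr p, pow_pos (div_pos hyp_pos (hx p)) k]
  exact le_of_mul_le_mul_right key (pow_pos hyp_pos k)

theorem specRad_le_of_tApplyR_le {B : Fin n → (Fin k → Fin n) → ℝ} (hB : NonnegT B)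
    {x : Fin n → ℝ} (hx : ∀ i, 0 < x i) {r : ℝ} (hr0 : 0 ≤ r)
    (hr : ∀ i, tApplyR B x i ≤ r * x i ^ k) : specRad B ≤ r := by
  refine Real.sSup_le ?_ hr0
  rintro _ ⟨lam, hlam, rfl⟩
  exact norm_le_of_isEig_of_tApplyR_le hB hx hr hlam

end TensorAction

/-- if `A ∈ 𝕫` and there is `x > 0` with `A x^{m-1} > 0` componentwise,
then `A` is an M-tensor. -/
theorem pos_image_mTensor {n k : ℕ} (A : Fin n → (Fin k → Fin n) → ℝ) (hZ : ZTensor A)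
    (x : Fin n → ℝ) (hx : ∀ i, 0 < x i) (hAx : ∀ i, 0 < tApplyR A x i) :
    IsMTensor A := by
  set c : ℝ := 1 + ∑ i, |A i (fun _ => i)|
  have hc : 0 < c := by positivity
  have hdiag : ∀ i, A i (fun _ => i) ≤ c := fun i =>
    calc A i (fun _ => i) ≤ |A i (fun _ => i)| := le_abs_self _
      _ ≤ ∑ i, |A i (fun _ => i)| :=
        Finset.single_le_sum (f := fun i => |A i (fun _ => i)|) (fun _ _ => abs_nonneg _)
          (Finset.mem_univ i)
      _ ≤ c := le_add_of_nonneg_left zero_le_one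
  set B : Fin n → (Fin k → Fin n) → ℝ := fun i j => c * idT n k i j - A i j
  have hB : NonnegT B := nonnegT_smul_idT_sub hZ hdiag
  have hBx : ∀ i, tApplyR B x i / x i ^ k < c := fun i => by
    rw [div_lt_iff₀ (pow_pos (hx i) k), tApplyR_smul_idT_sub]
    linarith [hAx i]
  obtain ⟨r, hrc, hr⟩ := Finite.exists_lt_forall_le_of_forall_lt hBx
  refine ⟨B, c, hB, ?_, fun i j => by simp [B]⟩
  -- `specRad` is an `sSup`, hence `0` when there are no eigenvalues; so bound it by `max r 0`.
  calc specRad B ≤ max r 0 :=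
        specRad_le_of_tApplyR_le hB hx (le_max_right _ _) fun i =>
          ((div_le_iff₀ (pow_pos (hx i) k)).mp (hr i)).trans
            (mul_le_mul_of_nonneg_right (le_max_left _ _) (pow_pos (hx i) k).le)
    _ < c := max_lt hrc hc
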